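/- arXiv:1409.6258 — 2 statements merged into one kernel-verified Lean document; each statement's English description precedes it below -/
import Mathlib

section
/- There exist a matrix A ∈ GL(n+1, ℂ) and formal power series g_0, g_1, …, g_{n−2} ∈ ℂ[[z]] such that for each i (0 ≤ i ≤ n−2) the order of g_i is exactly i+1 and the coefficient of z^{i+1} in g_i equals 1, and such that A·v = (1, z, g_0(z^k), g_1(z^k), …, g_{n−2}(z^k)) as a vector of formal power series, where g_i(z^k) denotes the substitution of z^k into g_i. (Equivalently, the ramification indices of the associated curves of the standard embedding at a fixed point p of the generalized Fermat group are b_1(p) = k−2 and b_l(p) = k−1 for 2 ≤ l ≤ n−1.) -/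
/-!
Away from the coordinates `1` and `z`, the parametrization is `v_{j+1}(z) = u_j(z^k)` with
`u_j(w) = ρ_j (1 + w / λ_{j-1})^{1/k}` (and `u_0 = 1` for `v_0`). The matrix of the first `n`
Taylor coefficients of `u_0, …, u_{n-1}` factors as a diagonal matrix times the Vandermonde matrix
of the distinct nodes `0, 1/λ_0, …, 1/λ_{n-2}` times the diagonal of the nonzero binomial
coefficients `C(1/k, i)`, so it is invertible. Applying its inverse to `(u_j)` gives series whose
first `n` coefficients form the identity; substituting `z^k` turns them into the required
`g_i(z^k)`, and the matrix acting on `v` is the inverse extended by the identity on the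
coordinate `z`.
-/

/-- The generalized binomial coefficient `C(x, i) = (∏_{m=0}^{i-1} (x - m)) / i!`. -/
noncomputable def genBinom (x : ℂ) (i : ℕ) : ℂ :=
  (∏ m ∈ Finset.range i, (x - (m : ℂ))) / (Nat.factorial i : ℂ)

open PowerSeries Matrix

theorem genBinom_ne_zero {x : ℂ} (hx : ∀ m : ℕ, x ≠ m) (i : ℕ) : genBinom x i ≠ 0 :=
  div_ne_zero (Finset.prod_ne_zero_iff.mpr fun m _ => sub_ne_zero.mpr (hx m))
    (Nat.cast_ne_zero.mpr i.factorial_ne_zero)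

theorem inv_natCast_ne_natCast {k : ℕ} (hk : 2 ≤ k) (m : ℕ) : (k : ℂ)⁻¹ ≠ m := by
  intro h
  have hk0 : (k : ℂ) ≠ 0 := by exact_mod_cast (by omega : k ≠ 0)
  have : ((m * k : ℕ) : ℂ) = 1 := by push_cast; rw [← h, inv_mul_cancel₀ hk0]
  have := Nat.eq_one_of_mul_eq_one_left (by exact_mod_cast this)
  omega

theorem Fin.val_one_succAbove {n : ℕ} (j : Fin n) :
    ((1 : Fin (n + 1)).succAbove j : ℕ) = if (j : ℕ) = 0 then 0 else (j : ℕ) + 1 := by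
  have := j.pos
  split_ifs with hj
  · rw [Fin.succAbove_of_castSucc_lt _ _ (by simp [Fin.lt_def, Nat.mod_eq_of_lt, *]),
      Fin.val_castSucc, hj]
  · rw [Fin.succAbove_of_le_castSucc _ _ (by simp [Fin.le_def, Nat.mod_eq_of_lt, *]; omega),
      Fin.val_succ]

namespace Matrix

theorem isUnit_det_diagonal_mul_vandermonde_mul_diagonal {K : Type*} [Field K] {n : ℕ}
    {d x c : Fin n → K} (hd : ∀ i, d i ≠ 0) (hx : Function.Injective x) (hc : ∀ i, c i ≠ 0) :
    IsUnit (diagonal d * vandermonde x * diagonal c).det := by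
  rw [isUnit_iff_ne_zero, det_mul, det_mul, det_diagonal, det_diagonal]
  exact mul_ne_zero (mul_ne_zero (Finset.prod_ne_zero_iff.mpr fun i _ => hd i)
    (det_vandermonde_ne_zero_iff.mpr hx)) (Finset.prod_ne_zero_iff.mpr fun i _ => hc i)

theorem row_eq_single_of_mul_eq_one {R ι : Type*} [CommRing R] [Fintype ι] [DecidableEq ι]
    {M B : Matrix ι ι R} (hMB : M * B = 1) {p : ι} (hM : M p = Pi.single p 1) :
    B p = Pi.single p 1 := by
  ext j
  simpa [mul_apply, hM, Pi.single_apply, one_apply, eq_comm] using congr_fun (congr_fun hMB p) j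

variable {R : Type*} {n : ℕ}

def extendAt [Zero R] [One R] (p : Fin (n + 1)) (X : Matrix (Fin n) (Fin n) R) :
    Matrix (Fin (n + 1)) (Fin (n + 1)) R :=
  let e := (finSuccEquiv' p).trans (Equiv.optionEquivSumPUnit.{0} (Fin n))
  (fromBlocks X 0 0 (1 : Matrix Unit Unit R)).submatrix e e

section

variable [Zero R] [One R] (p : Fin (n + 1)) (X : Matrix (Fin n) (Fin n) R)

@[simp]
theorem extendAt_apply_self_self : extendAt p X p p = 1 := by simp [extendAt]

@[simp]
theorem extendAt_apply_self_succAbove (j : Fin n) : extendAt p X p (p.succAbove j) = 0 := by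
  simp [extendAt]

@[simp]
theorem extendAt_apply_succAbove_self (i : Fin n) : extendAt p X (p.succAbove i) p = 0 := by
  simp [extendAt]

@[simp]
theorem extendAt_apply_succAbove_succAbove (i j : Fin n) :
    extendAt p X (p.succAbove i) (p.succAbove j) = X i j := by
  simp [extendAt]

end

theorem det_extendAt [CommRing R] (p : Fin (n + 1)) (X : Matrix (Fin n) (Fin n) R) :
    (extendAt p X).det = X.det := by
  rw [extendAt, det_submatrix_equiv_self, det_fromBlocks_zero₂₁, det_one, mul_one]

variable {M : Type*} [Semiring R] [AddCommMonoid M] [Module R M]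
  (p : Fin (n + 1)) (X : Matrix (Fin n) (Fin n) R) (w : Fin (n + 1) → M)

theorem sum_extendAt_self_smul : ∑ s, extendAt p X p s • w s = w p := by
  simp [Fin.sum_univ_succAbove _ p]

theorem sum_extendAt_succAbove_smul (i : Fin n) :
    ∑ s, extendAt p X (p.succAbove i) s • w s = ∑ j, X i j • w (p.succAbove j) := by
  simp [Fin.sum_univ_succAbove _ p]

end Matrix

namespace PowerSeries

variable {R : Type*} [CommRing R]

theorem coeff_sum_smul_of_mul_eq_one {n : ℕ} {u : Fin n → R⟦X⟧} {B : Matrix (Fin n) (Fin n) R}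
    (hB : B * of (fun j i : Fin n => coeff (i : ℕ) (u j)) = 1) (l i : Fin n) :
    coeff i (∑ j, B l j • u j) = (1 : Matrix (Fin n) (Fin n) R) l i := by
  simp [← hB, mul_apply]

theorem exists_normalForm_of_eq_expand [Nontrivial R] {n k : ℕ} [NeZero n] (hk : k ≠ 0)
    {u : Fin n → R⟦X⟧} (hu : IsUnit (of fun j i : Fin n => coeff (i : ℕ) (u j)).det)
    (hu0 : u 0 = 1) {w : ℕ → R⟦X⟧}
    (hw : ∀ j, w ((1 : Fin (n + 1)).succAbove j) = expand k hk (u j)) (hw1 : w 1 = X) :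
    ∃ (A : GL (Fin (n + 1)) R) (g : ℕ → R⟦X⟧),
      (∀ i, i + 1 < n → (g i).order = i + 1 ∧ coeff (i + 1) (g i) = 1) ∧
      ∀ r : Fin (n + 1), ∑ s, A.val r s • w s =
        if (r : ℕ) = 0 then 1 else if (r : ℕ) = 1 then X else expand k hk (g ((r : ℕ) - 2)) := by
  set M := of fun j i : Fin n => coeff (i : ℕ) (u j)
  set h : Fin n → R⟦X⟧ := fun l => ∑ j, M⁻¹ l j • u j
  have hh : ∀ l i : Fin n, coeff i (h l) = (1 : Matrix (Fin n) (Fin n) R) l i :=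
    coeff_sum_smul_of_mul_eq_one (nonsing_inv_mul M hu)
  have hh0 : h 0 = 1 := by
    have hrow0 : M⁻¹ 0 = Pi.single 0 1 :=
      row_eq_single_of_mul_eq_one (mul_nonsing_inv M hu) (by
        ext i
        simp only [M, of_apply, hu0, coeff_one, Pi.single_apply, Fin.val_eq_zero_iff])
    simp [h, hrow0, hu0]
  obtain ⟨A, hA⟩ : IsUnit (extendAt 1 M⁻¹) :=
    (isUnit_iff_isUnit_det _).mpr (by rwa [det_extendAt, isUnit_nonsing_inv_det_iff])
  refine ⟨A, fun i => if hi : i + 1 < n then h ⟨i + 1, hi⟩ else 0, fun i hi => ?_, fun r => ?_⟩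
  · have hg : ∀ m ≤ i + 1, coeff m (h ⟨i + 1, hi⟩) = if m = i + 1 then 1 else 0 :=
      fun m hm => by simpa [one_apply, Fin.ext_iff, eq_comm] using hh ⟨i + 1, hi⟩ ⟨m, by omega⟩
    simp only [dif_pos hi]
    refine ⟨?_, by simp [hg]⟩
    exact_mod_cast order_eq_nat.mpr ⟨by simp [hg], fun m hm => by simp [hg m hm.le, hm.ne]⟩
  · rw [hA]
    rcases Fin.eq_self_or_eq_succAbove 1 r with rfl | ⟨l, rfl⟩
    · have hval1 : ((1 : Fin (n + 1)) : ℕ) = 1 := by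
        rw [Fin.val_one', Nat.mod_eq_of_lt (by have := NeZero.pos n; omega)]
      rw [sum_extendAt_self_smul, hval1, hw1]
      rfl
    · have hrow : ∑ s, extendAt 1 M⁻¹ ((1 : Fin (n + 1)).succAbove l) s • w s =
          expand k hk (h l) := by
        simp_rw [sum_extendAt_succAbove_smul, hw, ← map_smul, ← map_sum, h]
      rw [hrow, Fin.val_one_succAbove]
      by_cases hl0 : (l : ℕ) = 0
      · simp [show l = 0 from Fin.ext hl0, hh0]
      · have hl : (l : ℕ) + 1 - 2 + 1 < n := by omega
        dsimp only
        rw [if_neg hl0, if_neg (by omega), if_neg (by omega), dif_pos hl,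
          show (⟨(l : ℕ) + 1 - 2 + 1, hl⟩ : Fin n) = l from Fin.ext (by dsimp only; omega)]

end PowerSeries

noncomputable section Fermat

variable (k : ℕ) (lam ρ : ℕ → ℂ)

def fermatNode (j : ℕ) : ℂ := if j = 0 then 0 else (lam (j - 1))⁻¹

def fermatScale (j : ℕ) : ℂ := if j = 0 then 1 else ρ j

/-- `u_j(w) = ρ_j (1 + w / λ_{j-1})^{1/k}`, so that `v_{j+1}(z) = u_j(z^k)`; `u_0 = 1`
accounts for `v_0`. -/
def fermatSeries (j : ℕ) : ℂ⟦X⟧ :=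
  fermatScale ρ j • rescale (fermatNode lam j) (mk (genBinom (k : ℂ)⁻¹))

theorem coeff_fermatSeries (j i : ℕ) :
    coeff i (fermatSeries k lam ρ j) =
      fermatScale ρ j * fermatNode lam j ^ i * genBinom (k : ℂ)⁻¹ i := by
  simp [fermatSeries, coeff_rescale, mul_assoc]

theorem fermatSeries_zero : fermatSeries k lam ρ 0 = 1 := by
  simp [fermatSeries, fermatScale, fermatNode, rescale_zero, genBinom]

variable {k lam ρ}

theorem isUnit_det_fermatCoeffMatrix {n : ℕ} (hk : 2 ≤ k) (hlam : ∀ i ≤ n - 2, lam i ≠ 0)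
    (hlam_inj : ∀ i j, i ≤ n - 2 → j ≤ n - 2 → lam i = lam j → i = j)
    (hρ : ∀ j, 1 ≤ j → j ≤ n - 1 → ρ j ^ k = - lam (j - 1)) :
    IsUnit (of fun j i : Fin n => coeff (i : ℕ) (fermatSeries k lam ρ j)).det := by
  have hscale (j : Fin n) : fermatScale ρ j ≠ 0 := by
    unfold fermatScale
    split_ifs with hj
    · exact one_ne_zero
    · refine fun h0 => hlam ((j : ℕ) - 1) (by omega) (neg_eq_zero.mp ?_)
      rw [← hρ j (by omega) (by omega), h0, zero_pow (by omega)]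
  have hnode : Function.Injective fun j : Fin n => fermatNode lam j := by
    intro a b hab
    simp only [fermatNode] at hab
    split_ifs at hab with ha hb hb
    · exact Fin.ext (ha.trans hb.symm)
    · exact absurd hab.symm (inv_ne_zero (hlam _ (by omega)))
    · exact absurd hab (inv_ne_zero (hlam _ (by omega)))
    · have := hlam_inj _ _ (by omega) (by omega) (inv_injective hab)
      exact Fin.ext (by omega)
  have hfactor : of (fun j i : Fin n => coeff (i : ℕ) (fermatSeries k lam ρ j)) =
      diagonal (fun j : Fin n => fermatScale ρ j) *
        vandermonde (fun j : Fin n => fermatNode lam j) *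
        diagonal (fun i : Fin n => genBinom (k : ℂ)⁻¹ i) := by
    ext j i
    simp [coeff_fermatSeries, vandermonde]
  rw [hfactor]
  exact isUnit_det_diagonal_mul_vandermonde_mul_diagonal hscale hnode
    fun i => genBinom_ne_zero (inv_natCast_ne_natCast hk) i

theorem expand_fermatSeries {n : ℕ} (hk : k ≠ 0) {v : ℕ → ℂ⟦X⟧} {c : ℕ → ℕ → ℂ}
    (hc : ∀ i j, c i j = ρ j * (lam (j - 1))⁻¹ ^ i * genBinom ((k : ℂ))⁻¹ i)
    (hv0 : v 0 = 1) (hv : ∀ j, 1 ≤ j → j ≤ n - 1 → ∀ m,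
      PowerSeries.coeff m (v (j + 1)) = if k ∣ m then c (m / k) j else 0) (j : Fin n) :
    v ((1 : Fin (n + 1)).succAbove j) = expand k hk (fermatSeries k lam ρ j) := by
  rw [Fin.val_one_succAbove]
  split_ifs with hj
  · rw [hj, hv0, fermatSeries_zero, map_one]
  · ext m
    rw [hv j (by omega) (by omega), coeff_expand, coeff_fermatSeries, hc]
    simp [fermatScale, fermatNode, hj]

end Fermat

theorem stmt_1_general (k n : ℕ) (hk : 2 ≤ k) (hn : 3 ≤ n)
    (lam : ℕ → ℂ) (hlam0 : lam 0 = 1)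
    (hlam_ne0 : ∀ i, 1 ≤ i → i ≤ n - 2 → lam i ≠ 0)
    (hlam_inj : ∀ i j, i ≤ n - 2 → j ≤ n - 2 → lam i = lam j → i = j)
    (ρ : ℕ → ℂ) (hρ : ∀ j, 1 ≤ j → j ≤ n - 1 → ρ j ^ k = - lam (j - 1))
    (c : ℕ → ℕ → ℂ)
    (hc : ∀ i j, c i j = ρ j * (lam (j - 1))⁻¹ ^ i * genBinom ((k : ℂ))⁻¹ i)
    (v : ℕ → PowerSeries ℂ)
    (hv0 : v 0 = 1) (hv1 : v 1 = PowerSeries.X)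
    (hv : ∀ j, 1 ≤ j → j ≤ n - 1 → ∀ m,
      PowerSeries.coeff m (v (j + 1)) = if k ∣ m then c (m / k) j else 0) :
    ∃ (A : Matrix.GeneralLinearGroup (Fin (n + 1)) ℂ) (g G : ℕ → PowerSeries ℂ),
      (∀ i, i ≤ n - 2 → (g i).order = i + 1) ∧
      (∀ i, i ≤ n - 2 → PowerSeries.coeff (i + 1) (g i) = 1) ∧
      (∀ i, i ≤ n - 2 → ∀ m, PowerSeries.coeff m (G i) =
        if k ∣ m then PowerSeries.coeff (m / k) (g i) else 0) ∧
      (∀ r : Fin (n + 1), ∑ s : Fin (n + 1), A.val r s • v (s : ℕ) =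
        if (r : ℕ) = 0 then 1
        else if (r : ℕ) = 1 then PowerSeries.X
        else G ((r : ℕ) - 2)) := by
  have hk0 : k ≠ 0 := by omega
  have : NeZero n := ⟨by omega⟩
  have hlam : ∀ i ≤ n - 2, lam i ≠ 0 := by
    rintro (_ | i) hi
    · simp [hlam0]
    · exact hlam_ne0 _ (by omega) hi
  obtain ⟨A, g, hg, hA⟩ := exists_normalForm_of_eq_expand hk0
    (isUnit_det_fermatCoeffMatrix hk hlam hlam_inj hρ) (by simp [fermatSeries_zero])
    (expand_fermatSeries hk0 hc hv0 hv) hv1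
  exact ⟨A, g, fun i => expand k hk0 (g i), fun i hi => (hg i (by omega)).1,
    fun i hi => (hg i (by omega)).2, fun i _ m => coeff_expand k hk0 (g i), hA⟩

/-- sharp normal form of the standard embedding of a generalized Fermat curve
of type `(k,n)` at a fixed point of its generalized Fermat group: there are a matrix
`A ∈ GL(n+1, ℂ)` and power series `g₀, …, g_{n-2}` with `g i` of order exactly `i + 1` and
leading coefficient `1`, such that `A · v = (1, z, g₀(z^k), …, g_{n-2}(z^k))`.  Here `G i`
denotes the substitution of `z^k` into `g i`, characterized by its coefficients.
(Equivalently, `b₁(p) = k - 2` and `b_l(p) = k - 1` for `2 ≤ l ≤ n - 1`.) -/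
theorem stmt_1 (k n : ℕ) (hk : 2 ≤ k) (hn : 3 ≤ n)
    (lam : ℕ → ℂ) (hlam0 : lam 0 = 1)
    (hlam_ne0 : ∀ i, 1 ≤ i → i ≤ n - 2 → lam i ≠ 0)
    (hlam_ne1 : ∀ i, 1 ≤ i → i ≤ n - 2 → lam i ≠ 1)
    (hlam_inj : ∀ i j, i ≤ n - 2 → j ≤ n - 2 → lam i = lam j → i = j)
    (ρ : ℕ → ℂ) (hρ : ∀ j, 1 ≤ j → j ≤ n - 1 → ρ j ^ k = - lam (j - 1))
    (c : ℕ → ℕ → ℂ)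
    (hc : ∀ i j, c i j = ρ j * (lam (j - 1))⁻¹ ^ i * genBinom ((k : ℂ))⁻¹ i)
    (v : ℕ → PowerSeries ℂ)
    (hv0 : v 0 = 1) (hv1 : v 1 = PowerSeries.X)
    (hv : ∀ j, 1 ≤ j → j ≤ n - 1 → ∀ m,
      PowerSeries.coeff m (v (j + 1)) = if k ∣ m then c (m / k) j else 0) :
    ∃ (A : Matrix.GeneralLinearGroup (Fin (n + 1)) ℂ) (g G : ℕ → PowerSeries ℂ),
      (∀ i, i ≤ n - 2 → (g i).order = i + 1) ∧
      (∀ i, i ≤ n - 2 → PowerSeries.coeff (i + 1) (g i) = 1) ∧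
      (∀ i, i ≤ n - 2 → ∀ m, PowerSeries.coeff m (G i) =
        if k ∣ m then PowerSeries.coeff (m / k) (g i) else 0) ∧
      (∀ r : Fin (n + 1), ∑ s : Fin (n + 1), A.val r s • v (s : ℕ) =
        if (r : ℕ) = 0 then 1
        else if (r : ℕ) = 1 then PowerSeries.X
        else G ((r : ℕ) - 2)) :=
  stmt_1_general k n hk hn lam hlam0 hlam_ne0 hlam_inj ρ hρ c hc v hv0 hv1 hv
end

section
/- Let x, y ∈ ℂ^{n+1} be nonzero vectors each satisfying the defining equations of S. Then x_1^k·y_0^k = y_1^k·x_0^k if and only if there exist μ ∈ ℂ with μ ≠ 0 and ζ_0, …, ζ_n ∈ ℂ with ζ_j^k = 1 for every j, such that y_j = μ·ζ_j·x_j for all j = 0, …, n. (That is, each fiber of the morphism S → ℙ¹, [x_0 : ⋯ : x_n] ↦ [−x_1^k : x_0^k], is exactly one orbit of the generalized Fermat group H ≅ (ℤ/kℤ)^n generated by the coordinate-wise multiplications by k-th roots of unity.) -/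
/-!
The `k`-th powers of the coordinates of a solution are affine-linear in `(x₀^k, x₁^k)`:
`x_{i+2}^k = -λᵢ x₀^k - x₁^k`. Lying in the same fiber means that `(y₀^k, y₁^k)` is a nonzero
multiple `c` of `(x₀^k, x₁^k)`, hence `y_j^k = c x_j^k` for every `j`. Taking `μ` with `μ^k = c`,
each quotient `y_j / (μ x_j)` is a `k`-th root of unity.
-/

open Fin.NatCast in
/-- A nonzero vector `x ∈ ℂ^{n+1}` satisfies the defining equations of the generalized
Fermat curve of type `(k,n)`: `lam i * x₀^k + x₁^k + x_{i+2}^k = 0` for `0 ≤ i ≤ n - 2`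
(with `lam 0 = 1`). -/
def fermatEqns (n k : ℕ) (lam : ℕ → ℂ) (x : Fin (n + 1) → ℂ) : Prop :=
  ∀ i : ℕ, i ≤ n - 2 → lam i * x 0 ^ k + x 1 ^ k + x ((i + 2 : ℕ) : Fin (n + 1)) ^ k = 0

lemma Fin.eq_zero_or_eq_one_or_two_le {n : ℕ} (j : Fin (n + 1)) :
    j = 0 ∨ j = 1 ∨ 2 ≤ (j : ℕ) := by
  rcases j with ⟨_ | _ | j, hj⟩
  · exact Or.inl rfl
  · exact Or.inr (Or.inl (Fin.ext (by simp [Nat.mod_eq_of_lt hj])))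
  · exact Or.inr (Or.inr (by simp))

lemma exists_eq_mul_of_mul_eq_mul {K : Type*} [Field K] {a₀ a₁ b₀ b₁ : K}
    (ha : a₀ ≠ 0 ∨ a₁ ≠ 0) (hb : b₀ ≠ 0 ∨ b₁ ≠ 0) (h : a₁ * b₀ = b₁ * a₀) :
    ∃ c ≠ 0, b₀ = c * a₀ ∧ b₁ = c * a₁ := by
  rcases ha with ha₀ | ha₁
  · refine ⟨b₀ / a₀, div_ne_zero (fun hb₀ => ?_) ha₀, by field_simp,
      by field_simp; linear_combination -h⟩
    have : b₁ * a₀ = 0 := by rw [← h, hb₀, mul_zero]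
    exact hb.elim (· hb₀) (· ((mul_eq_zero.mp this).resolve_right ha₀))
  · refine ⟨b₁ / a₁, div_ne_zero (fun hb₁ => ?_) ha₁, by field_simp; linear_combination h,
      by field_simp⟩
    have : a₁ * b₀ = 0 := by rw [h, hb₁, zero_mul]
    exact hb.elim (· ((mul_eq_zero.mp this).resolve_left ha₁)) (· hb₁)

lemma exists_pow_eq_one_and_eq_mul_mul {K : Type*} [Field K] {k : ℕ} (hk : k ≠ 0)
    {μ a b : K} (hμ : μ ≠ 0) (h : b ^ k = μ ^ k * a ^ k) :
    ∃ ζ : K, ζ ^ k = 1 ∧ b = μ * ζ * a := by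
  by_cases ha : a = 0
  · refine ⟨1, one_pow k, ?_⟩
    simpa [ha, hk] using h
  · refine ⟨b / (μ * a), ?_, by field_simp⟩
    rw [div_pow, h, mul_pow, div_self (mul_ne_zero (pow_ne_zero k hμ) (pow_ne_zero k ha))]

namespace fermatEqns

variable {n k : ℕ} {lam : ℕ → ℂ} {x y : Fin (n + 1) → ℂ}

open Fin.NatCast in
lemma pow_eq_of_two_le (hx : fermatEqns n k lam x) {j : Fin (n + 1)} (hj : 2 ≤ (j : ℕ)) :
    x j ^ k = -(lam (j - 2) * x 0 ^ k) - x 1 ^ k := by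
  have hcast : (((j - 2 + 2 : ℕ) : Fin (n + 1))) = j := by
    ext
    rw [Fin.val_cast_of_lt (by omega)]
    omega
  have := hx (j - 2) (by omega)
  rw [hcast] at this
  linear_combination this

lemma pow_eq_mul_pow (hx : fermatEqns n k lam x) (hy : fermatEqns n k lam y)
    {c : ℂ} (h₀ : y 0 ^ k = c * x 0 ^ k) (h₁ : y 1 ^ k = c * x 1 ^ k) (j : Fin (n + 1)) :
    y j ^ k = c * x j ^ k := by
  rcases Fin.eq_zero_or_eq_one_or_two_le j with rfl | rfl | hj
  · exact h₀
  · exact h₁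
  · rw [hx.pow_eq_of_two_le hj, hy.pow_eq_of_two_le hj, h₀, h₁]
    ring

lemma apply_zero_ne_zero_or_apply_one_ne_zero (hk : k ≠ 0) (hx : fermatEqns n k lam x)
    (hx0 : x ≠ 0) : x 0 ≠ 0 ∨ x 1 ≠ 0 := by
  by_contra! h
  -- `x j ^ k = 0 * x j ^ k` holds for `j = 0, 1`, hence for every `j`
  refine hx0 (funext fun j => pow_eq_zero_iff hk |>.mp ?_)
  simpa using hx.pow_eq_mul_pow hx (c := 0) (by simp [h.1, hk]) (by simp [h.2, hk]) j

end fermatEqns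

theorem stmt_14_general (k n : ℕ) (hk : 2 ≤ k)
    (lam : ℕ → ℂ)
    (x y : Fin (n + 1) → ℂ) (hx : x ≠ 0) (hy : y ≠ 0)
    (hex : fermatEqns n k lam x) (hey : fermatEqns n k lam y) :
    x 1 ^ k * y 0 ^ k = y 1 ^ k * x 0 ^ k ↔
      ∃ μ : ℂ, μ ≠ 0 ∧ ∃ ζ : Fin (n + 1) → ℂ,
        (∀ j, ζ j ^ k = 1) ∧ ∀ j, y j = μ * ζ j * x j := by
  have hk0 : k ≠ 0 := by omega
  constructor
  · intro h
    have pow_ne_zero_or (z : Fin (n + 1) → ℂ) (hz : z ≠ 0) (hez : fermatEqns n k lam z) :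
        z 0 ^ k ≠ 0 ∨ z 1 ^ k ≠ 0 :=
      (hez.apply_zero_ne_zero_or_apply_one_ne_zero hk0 hz).imp (pow_ne_zero k) (pow_ne_zero k)
    obtain ⟨c, hc, h₀, h₁⟩ :=
      exists_eq_mul_of_mul_eq_mul (pow_ne_zero_or x hx hex) (pow_ne_zero_or y hy hey) h
    obtain ⟨μ, rfl⟩ := IsAlgClosed.exists_pow_nat_eq c (Nat.pos_of_ne_zero hk0)
    have hμ : μ ≠ 0 := fun h => hc (by simp [h, hk0])
    choose ζ hζ using fun j =>
      exists_pow_eq_one_and_eq_mul_mul hk0 hμ (hex.pow_eq_mul_pow hey h₀ h₁ j)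
    exact ⟨μ, hμ, ζ, fun j => (hζ j).1, fun j => (hζ j).2⟩
  · rintro ⟨μ, -, ζ, hζ, hyx⟩
    rw [hyx 0, hyx 1, mul_pow, mul_pow, mul_pow, mul_pow, hζ 0, hζ 1]
    ring

/-- two nonzero solutions of the defining equations of the generalized
Fermat curve `S` of type `(k,n)` lie in the same fiber of `S → ℙ¹`,
`[x₀ : ⋯ : xₙ] ↦ [-x₁^k : x₀^k]` (i.e. `x₁^k y₀^k = y₁^k x₀^k`) iff they differ by a
global scalar times coordinate-wise multiplication by `k`-th roots of unity, i.e. lie in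
the same orbit of the generalized Fermat group `H ≅ (ℤ/kℤ)ⁿ`. -/
theorem stmt_14 (k n : ℕ) (hk : 2 ≤ k) (hn : 2 ≤ n)
    (lam : ℕ → ℂ) (hlam0 : lam 0 = 1)
    (hlam_ne0 : ∀ i, 1 ≤ i → i ≤ n - 2 → lam i ≠ 0)
    (hlam_ne1 : ∀ i, 1 ≤ i → i ≤ n - 2 → lam i ≠ 1)
    (hlam_inj : ∀ i j, i ≤ n - 2 → j ≤ n - 2 → lam i = lam j → i = j)
    (x y : Fin (n + 1) → ℂ) (hx : x ≠ 0) (hy : y ≠ 0)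
    (hex : fermatEqns n k lam x) (hey : fermatEqns n k lam y) :
    x 1 ^ k * y 0 ^ k = y 1 ^ k * x 0 ^ k ↔
      ∃ μ : ℂ, μ ≠ 0 ∧ ∃ ζ : Fin (n + 1) → ℂ,
        (∀ j, ζ j ^ k = 1) ∧ ∀ j, y j = μ * ζ j * x j :=
  stmt_14_general k n hk lam x y hx hy hex hey
end
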